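/- Let (X,d) be a compact metric space and f_{0,∞} = {f_n}_{n=0}^∞ a sequence of continuous self-maps of X. Then (X, f_{0,∞}) is topologically mixing if and only if the induced system (𝓜(X), f̂_{0,∞}) is topologically mixing. -/

import Mathlib

open MeasureTheory Filter

/-- `nacomp f n = f_{n-1} ∘ ⋯ ∘ f_0` (with `nacomp f 0 = id`): the time-`n` map of the
non-autonomous system `(X, f_{0,∞})`. -/
def nacomp {Y : Type*} (f : ℕ → Y → Y) : ℕ → Y → Y
  | 0 => id
  | n + 1 => f n ∘ nacomp f n

/-- The induced pushforward map `f̂` on the space `𝓜(X)` of Borel probability measures,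
equipped with the Lévy–Prokhorov metric. -/
noncomputable def inducedMap {X : Type*} [MetricSpace X] [MeasurableSpace X] [BorelSpace X]
    (f : X → X) (hf : Continuous f) :
    LevyProkhorov (ProbabilityMeasure X) → LevyProkhorov (ProbabilityMeasure X) :=
  fun μ => (LevyProkhorov.toMeasureEquiv (α := ProbabilityMeasure X)).symm
    (((LevyProkhorov.toMeasureEquiv (α := ProbabilityMeasure X)) μ).map hf.measurable.aemeasurable)

/-- Topological mixing of the non-autonomous system given by the maps `f n`. -/
def NAMixing {Y : Type*} [TopologicalSpace Y] (f : ℕ → Y → Y) : Prop :=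
  ∀ U V : Set Y, IsOpen U → IsOpen V → U.Nonempty → V.Nonempty →
    ∃ N, 1 ≤ N ∧ ∀ n, N ≤ n → (nacomp f n '' U ∩ V).Nonempty

/-!
If `μ` is within `ε < 1/2` of `δ_x` in the Lévy–Prokhorov metric, then `μ` gives mass `> 1/2`
to the `ε`-ball around `x`; so a measure near `δ_x` whose `n`-th image is near `δ_y` forces some
point near `x` to be sent near `y`. Conversely, measures `u_* m` with `m` a probability on a
finite set `ι` and `u : ι → X` are dense, and for fixed `m` the map `u ↦ u_* m` is 1-Lipschitz
from `X^ι` and intertwines the product system with the induced one. Taking the product of the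
weights of two approximating measures puts both on a common `ι`, and mixing passes from `X` to the
finite product `X^ι`.
-/

open Metric Set Function

section Nacomp

variable {Y : Type*}

theorem continuous_nacomp [TopologicalSpace Y] {f : ℕ → Y → Y}
    (hf : ∀ n, Continuous (f n)) : ∀ n, Continuous (nacomp f n)
  | 0 => continuous_id
  | n + 1 => (hf n).comp (continuous_nacomp hf n)

theorem nacomp_comp_left {ι : Type*} (f : ℕ → Y → Y) (n : ℕ) (u : ι → Y) :
    nacomp (fun n (u : ι → Y) => f n ∘ u) n u = nacomp f n ∘ u := by
  induction n with
  | zero => rfl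
  | succ n ih => exact congrArg (f n ∘ ·) ih

end Nacomp

section Mixing

variable {Y Z : Type*} [TopologicalSpace Y] [TopologicalSpace Z]

theorem NAMixing.pi {ι : Type*} [Finite ι] {f : ℕ → Y → Y} (hf : NAMixing f) :
    NAMixing (fun n (u : ι → Y) => f n ∘ u) := by
  intro U V hU hV ⟨u, hu⟩ ⟨v, hv⟩
  obtain ⟨A, hA, hAU⟩ := isOpen_pi_iff'.1 hU u hu
  obtain ⟨B, hB, hBV⟩ := isOpen_pi_iff'.1 hV v hv
  choose N hN1 hN using fun i =>
    hf (A i) (B i) (hA i).1 (hB i).1 ⟨u i, (hA i).2⟩ ⟨v i, (hB i).2⟩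
  have := Fintype.ofFinite ι
  refine ⟨Finset.univ.sup N ⊔ 1, le_sup_right, fun n hn => ?_⟩
  have hNn : ∀ i, N i ≤ n := fun i =>
    (Finset.le_sup (Finset.mem_univ i)).trans (le_sup_left.trans hn)
  have hx : ∀ i, ∃ x ∈ A i, nacomp f n x ∈ B i := fun i => by
    obtain ⟨_, ⟨x, hxA, rfl⟩, hxB⟩ := hN i n (hNn i)
    exact ⟨x, hxA, hxB⟩
  choose x hxA hxB using hx
  refine ⟨_, ⟨x, hAU fun i _ => hxA i, rfl⟩, hBV fun i _ => ?_⟩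
  rw [nacomp_comp_left]
  exact hxB i

theorem NAMixing.exists_image_inter_nonempty_of_semiconj {g : ℕ → Y → Y} {h : ℕ → Z → Z}
    {φ : Y → Z} (hg : NAMixing g) (hφ : Continuous φ)
    (hφgh : ∀ n, Semiconj φ (nacomp g n) (nacomp h n)) {U V : Set Z} (hU : IsOpen U)
    (hV : IsOpen V) {y y' : Y} (hy : φ y ∈ U) (hy' : φ y' ∈ V) :
    ∃ N, 1 ≤ N ∧ ∀ n, N ≤ n → (nacomp h n '' U ∩ V).Nonempty := by
  obtain ⟨N, hN1, hN⟩ := hg _ _ (hU.preimage hφ) (hV.preimage hφ) ⟨y, hy⟩ ⟨y', hy'⟩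
  refine ⟨N, hN1, fun n hn => ?_⟩
  obtain ⟨_, ⟨x, hxU, rfl⟩, hxV⟩ := hN n hn
  exact ⟨φ (nacomp g n x), ⟨φ x, hxU, (hφgh n x).symm⟩, hxV⟩

end Mixing

section Approximation

open scoped ENNReal

variable {X : Type*}

theorem levyProkhorovDist_map_le [PseudoMetricSpace X] [MeasurableSpace X]
    [OpensMeasurableSpace X] {Ω : Type*} [MeasurableSpace Ω] (m : Measure Ω)
    [IsProbabilityMeasure m] {g g' : Ω → X} (hg : Measurable g) (hg' : Measurable g') {δ : ℝ}
    (hδ : 0 ≤ δ) (hgg' : ∀ ω, dist (g ω) (g' ω) ≤ δ) :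
    levyProkhorovDist (m.map g) (m.map g') ≤ δ := by
  have := Measure.isProbabilityMeasure_map (μ := m) hg.aemeasurable
  have := Measure.isProbabilityMeasure_map (μ := m) hg'.aemeasurable
  refine levyProkhorovDist_le_of_forall_le _ _ hδ fun ε B hε hB => ?_
  rw [Measure.map_apply hg hB, Measure.map_apply hg' isOpen_thickening.measurableSet]
  refine le_add_right (measure_mono fun ω hω => ?_)
  exact mem_thickening_iff.2 ⟨g ω, hω, by rw [dist_comm]; exact (hgg' ω).trans_lt hε⟩

theorem exists_simpleFunc_dist_lt [PseudoMetricSpace X] [CompactSpace X] [Nonempty X]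
    [MeasurableSpace X] [OpensMeasurableSpace X] {δ : ℝ} (hδ : 0 < δ) :
    ∃ g : SimpleFunc X X, ∀ x, dist (g x) x < δ := by
  obtain ⟨e, he⟩ := TopologicalSpace.exists_dense_seq X
  obtain ⟨t, ht⟩ := isCompact_univ.elim_finite_subcover (fun n => ball (e n) δ)
    (fun _ => isOpen_ball) fun x _ => mem_iUnion.2 ((he.exists_dist_lt x hδ).imp fun _ h => by
      rwa [mem_ball])
  refine ⟨SimpleFunc.nearestPt e (t.sup id), fun x => ?_⟩
  obtain ⟨k, hk, hx⟩ := mem_iUnion₂.1 (ht (mem_univ x))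
  have hkN : k ≤ t.sup id := Finset.le_sup (f := id) hk
  refine edist_lt_ofReal.1 ((SimpleFunc.edist_nearestPt_le e x hkN).trans_lt ?_)
  rwa [edist_lt_ofReal, dist_comm, ← mem_ball]

theorem one_sub_le_measureReal_ball_of_levyProkhorovDist_dirac_lt [MetricSpace X]
    [MeasurableSpace X] [OpensMeasurableSpace X] {ρ : Measure X} [IsFiniteMeasure ρ] {x : X}
    {ε : ℝ} (h : levyProkhorovDist (Measure.dirac x) ρ < ε) :
    1 - ε ≤ ρ.real (ball x ε) := by
  have hε : 0 < ε := ENNReal.toReal_nonneg.trans_lt h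
  have hlt : levyProkhorovEDist (Measure.dirac x) ρ < ENNReal.ofReal ε :=
    (ENNReal.lt_ofReal_iff_toReal_lt (levyProkhorovEDist_ne_top _ _)).2 h
  have h1 : 1 ≤ ρ (ball x ε) + ENNReal.ofReal ε := by
    have := left_measure_le_of_levyProkhorovEDist_lt hlt (measurableSet_singleton x)
    rwa [Measure.dirac_apply_of_mem (mem_singleton x), ENNReal.toReal_ofReal hε.le,
      thickening_singleton] at this
  have h2 := ENNReal.toReal_mono (by finiteness) h1
  rw [ENNReal.toReal_add (measure_ne_top _ _) ENNReal.ofReal_ne_top,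
    ENNReal.toReal_ofReal hε.le, ENNReal.toReal_one] at h2
  rw [measureReal_def]
  linarith

end Approximation

section PushMeasure

variable {X : Type*} [MeasurableSpace X]

theorem levyProkhorov_probabilityMeasure_ext {μ ν : LevyProkhorov (ProbabilityMeasure X)}
    (h : (μ.toMeasure : Measure X) = ν.toMeasure) : μ = ν :=
  LevyProkhorov.toMeasure_injective (ProbabilityMeasure.toMeasure_injective h)

noncomputable def pushMeasure {ι : Type*} [MeasurableSpace ι] [Countable ι]
    [MeasurableSingletonClass ι] (m : ProbabilityMeasure ι) (u : ι → X) :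
    LevyProkhorov (ProbabilityMeasure X) :=
  .ofMeasure (m.map (measurable_of_countable u).aemeasurable)

variable {ι : Type*} [MeasurableSpace ι] [Countable ι] [MeasurableSingletonClass ι]

theorem toMeasure_pushMeasure (m : ProbabilityMeasure ι) (u : ι → X) :
    ((pushMeasure m u).toMeasure : Measure X) = (m : Measure ι).map u :=
  ProbabilityMeasure.toMeasure_map _ (measurable_of_countable u).aemeasurable

theorem pushMeasure_comp {κ : Type*} [MeasurableSpace κ] [Countable κ]
    [MeasurableSingletonClass κ] (m : ProbabilityMeasure ι) (u : κ → X) (π : ι → κ) :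
    pushMeasure m (u ∘ π) = pushMeasure (m.map (measurable_of_countable π).aemeasurable) u := by
  refine levyProkhorov_probabilityMeasure_ext ?_
  rw [toMeasure_pushMeasure, toMeasure_pushMeasure, ProbabilityMeasure.toMeasure_map,
    Measure.map_map (measurable_of_countable u) (measurable_of_countable π)]

end PushMeasure

section PushMeasureMetric

variable {X : Type*} [MetricSpace X] [MeasurableSpace X] [BorelSpace X]

theorem lipschitzWith_pushMeasure {ι : Type*} [Fintype ι] [MeasurableSpace ι]
    [MeasurableSingletonClass ι] (m : ProbabilityMeasure ι) :
    LipschitzWith 1 (pushMeasure (X := X) m) :=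
  LipschitzWith.of_dist_le_mul fun u v => by
    rw [NNReal.coe_one, one_mul]
    exact levyProkhorovDist_map_le _ (measurable_of_countable u) (measurable_of_countable v)
      dist_nonneg fun i => dist_le_pi_dist u v i

theorem exists_dist_pushMeasure_lt [CompactSpace X]
    (μ : LevyProkhorov (ProbabilityMeasure X)) {δ : ℝ} (hδ : 0 < δ) :
    ∃ (s : Finset X) (α : ProbabilityMeasure s), dist μ (pushMeasure α Subtype.val) < δ := by
  have := μ.toMeasure.nonempty
  obtain ⟨g, hg⟩ := exists_simpleFunc_dist_lt (X := X) (half_pos hδ)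
  have hπ : Measurable fun x => (⟨g x, g.mem_range_self x⟩ : g.range) :=
    g.measurable.subtype_mk
  let α : ProbabilityMeasure g.range := μ.toMeasure.map hπ.aemeasurable
  refine ⟨g.range, α, ?_⟩
  have hαg : ((pushMeasure α Subtype.val).toMeasure : Measure X) =
      (μ.toMeasure : Measure X).map g := by
    rw [toMeasure_pushMeasure, ProbabilityMeasure.toMeasure_map,
      Measure.map_map (measurable_of_countable _) hπ]
    rfl
  calc dist μ (pushMeasure α Subtype.val)
      = levyProkhorovDist ((μ.toMeasure : Measure X).map id)
          ((μ.toMeasure : Measure X).map g) := by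
        rw [LevyProkhorov.dist_probabilityMeasure_def, hαg, Measure.map_id]
    _ ≤ δ / 2 := levyProkhorovDist_map_le _ measurable_id g.measurable (half_pos hδ).le
        fun x => by rw [dist_comm]; exact (hg x).le
    _ < δ := half_lt_self hδ

end PushMeasureMetric

section InducedMap

variable {X : Type*} [MetricSpace X] [MeasurableSpace X] [BorelSpace X]

theorem toMeasure_inducedMap {g : X → X} (hg : Continuous g)
    (μ : LevyProkhorov (ProbabilityMeasure X)) :
    ((inducedMap g hg μ).toMeasure : Measure X) = (μ.toMeasure : Measure X).map g :=
  ProbabilityMeasure.toMeasure_map _ hg.measurable.aemeasurable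

theorem inducedMap_comp {g h : X → X} (hg : Continuous g) (hh : Continuous h) :
    inducedMap (g ∘ h) (hg.comp hh) = inducedMap g hg ∘ inducedMap h hh := by
  ext1 μ
  refine levyProkhorov_probabilityMeasure_ext ?_
  rw [comp_apply, toMeasure_inducedMap, toMeasure_inducedMap, toMeasure_inducedMap,
    Measure.map_map hg.measurable hh.measurable]

theorem nacomp_inducedMap {f : ℕ → X → X} (hf : ∀ n, Continuous (f n)) (n : ℕ) :
    nacomp (fun n => inducedMap (f n) (hf n)) n =
      inducedMap (nacomp f n) (continuous_nacomp hf n) := by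
  induction n with
  | zero =>
    ext1 μ
    refine levyProkhorov_probabilityMeasure_ext ?_
    rw [toMeasure_inducedMap]
    exact Measure.map_id.symm
  | succ n ih => rw [nacomp, ih, ← inducedMap_comp]; rfl

theorem inducedMap_pushMeasure {ι : Type*} [MeasurableSpace ι] [Countable ι]
    [MeasurableSingletonClass ι] {g : X → X} (hg : Continuous g) (m : ProbabilityMeasure ι)
    (u : ι → X) : inducedMap g hg (pushMeasure m u) = pushMeasure m (g ∘ u) := by
  refine levyProkhorov_probabilityMeasure_ext ?_
  rw [toMeasure_inducedMap, toMeasure_pushMeasure, toMeasure_pushMeasure,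
    Measure.map_map hg.measurable (measurable_of_countable u)]

theorem NAMixing.induced [CompactSpace X] {f : ℕ → X → X} (hf : ∀ n, Continuous (f n))
    (hmix : NAMixing f) : NAMixing (fun n => inducedMap (f n) (hf n)) := by
  intro U V hU hV ⟨μ, hμ⟩ ⟨ν, hν⟩
  obtain ⟨ε, hε, hεU⟩ := Metric.isOpen_iff.1 hU μ hμ
  obtain ⟨ε', hε', hεV⟩ := Metric.isOpen_iff.1 hV ν hν
  obtain ⟨s, α, hα⟩ := exists_dist_pushMeasure_lt μ hε
  obtain ⟨t, β, hβ⟩ := exists_dist_pushMeasure_lt ν hε'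
  refine (hmix.pi (ι := s × t)).exists_image_inter_nonempty_of_semiconj
    (lipschitzWith_pushMeasure (α.prod β)).continuous (fun n u => ?_) hU hV
    (y := Subtype.val ∘ Prod.fst) (y' := Subtype.val ∘ Prod.snd) ?_ ?_
  · rw [nacomp_comp_left, nacomp_inducedMap, inducedMap_pushMeasure]
  · rw [pushMeasure_comp, ProbabilityMeasure.map_fst_prod]
    exact hεU (mem_ball'.2 hα)
  · rw [pushMeasure_comp, ProbabilityMeasure.map_snd_prod]
    exact hεV (mem_ball'.2 hβ)

theorem NAMixing.of_induced {f : ℕ → X → X} (hf : ∀ n, Continuous (f n))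
    (hmix : NAMixing (fun n => inducedMap (f n) (hf n))) : NAMixing f := by
  intro U V hU hV ⟨x, hx⟩ ⟨y, hy⟩
  obtain ⟨r, hr, hrU⟩ := Metric.isOpen_iff.1 hU x hx
  obtain ⟨r', hr', hr'V⟩ := Metric.isOpen_iff.1 hV y hy
  set ε := min (min r r') (1 / 4)
  have hε : 0 < ε := by positivity
  let dirac (z : X) : LevyProkhorov (ProbabilityMeasure X) :=
    .ofMeasure ⟨Measure.dirac z, inferInstance⟩
  obtain ⟨N, hN1, hN⟩ := hmix (ball (dirac x) ε) (ball (dirac y) ε) isOpen_ball isOpen_ball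
    ⟨_, mem_ball_self hε⟩ ⟨_, mem_ball_self hε⟩
  refine ⟨N, hN1, fun n hn => ?_⟩
  obtain ⟨_, ⟨ρ, hρx, rfl⟩, hρy⟩ := hN n hn
  set T := nacomp f n
  have hT : Measurable T := (continuous_nacomp hf n).measurable
  rw [mem_ball', LevyProkhorov.dist_probabilityMeasure_def] at hρx hρy
  rw [nacomp_inducedMap, toMeasure_inducedMap] at hρy
  set P : Measure X := ρ.toMeasure.toMeasure
  have hPx := one_sub_le_measureReal_ball_of_levyProkhorovDist_dirac_lt hρx
  have hPy := one_sub_le_measureReal_ball_of_levyProkhorovDist_dirac_lt hρy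
  rw [map_measureReal_apply hT measurableSet_ball] at hPy
  have hε4 : ε ≤ 1 / 4 := min_le_right _ _
  obtain ⟨z, hzx, hzy⟩ := nonempty_inter_of_measureReal_lt_add (μ := P) (s := ball x ε)
    (hT measurableSet_ball) (subset_univ _) (subset_univ _) (by rw [probReal_univ]; linarith)
  exact ⟨T z, mem_image_of_mem T (hrU (ball_subset_ball (by simp [ε]) hzx)),
    hr'V (ball_subset_ball (by simp [ε]) hzy)⟩

end InducedMap

/-- `(X, f_{0,∞})` is topologically mixing iff the induced system `(𝓜(X), f̂_{0,∞})` is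
topologically mixing. -/
theorem mixing_iff_induced_mixing
    {X : Type*} [MetricSpace X] [CompactSpace X] [MeasurableSpace X] [BorelSpace X]
    (f : ℕ → X → X) (hf : ∀ n, Continuous (f n)) :
    NAMixing f ↔ NAMixing (fun n => inducedMap (f n) (hf n)) :=
  ⟨NAMixing.induced hf, NAMixing.of_induced hf⟩
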